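/- arXiv:2110.02456 — 5 statements merged into one kernel-verified Lean document; each statement's English description precedes it below -/
import Mathlib

section
/- For every integer k ≥ 1, every dimension d ≥ 1, every matrix W = [w₁ ⋯ w_k] ∈ ℝ^{d×k} and every vector b = (b₁,…,b_k) ∈ ℝ^k, the number of distinct sign vectors |𝔖_{W,b}| = |{sgn(Wᵀx + b) : x ∈ ℝ^d}| is at most binom(k, ≤ d). -/
/-!
A subset `T` of the hyperplanes with `#T > d` cannot be shattered by the sign patterns: the
normals `wⱼ` (`j ∈ T`) are linearly dependent, so some nontrivial combination `∑ λⱼ fⱼ` of the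
affine functions `fⱼ x = ⟨wⱼ, x⟩ + bⱼ` is a constant `c`. A point realising the pattern
`{λⱼ > 0}` makes every term `λⱼ fⱼ x` nonnegative, a point realising `{λⱼ < 0}` makes every
term nonpositive, and one of the two inequalities is strict. Hence the family of sign patterns
has VC dimension at most `d`, and the Sauer–Shelah lemma bounds its size by `binom(k, ≤ d)`.
-/

/-- The sign function: `sgn t = 1` if `t ≥ 0`, and `-1` otherwise. -/
noncomputable def sgn (t : ℝ) : ℝ := if 0 ≤ t then 1 else -1

/-- The sign vector `sgn(Wᵀx + b)` of the hyperplane arrangement `(W, b)` at `x`. -/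
noncomputable def signVec {d k : ℕ} (W : Matrix (Fin d) (Fin k) ℝ) (b : Fin k → ℝ)
    (x : Fin d → ℝ) : Fin k → ℝ :=
  fun j => sgn ((∑ i, W i j * x i) + b j)

/-- `binomLe k r = binom(k, ≤ r)`, i.e. `2^k` if `k < r` and `C(k,0) + ⋯ + C(k,r)` if `k ≥ r`. -/
def binomLe (k r : ℕ) : ℕ :=
  if k < r then 2 ^ k else ∑ i ∈ Finset.range (r + 1), k.choose i

open Finset Module

noncomputable def signPattern {X ι : Type*} [Fintype ι] (f : ι → X → ℝ) (x : X) : Finset ι :=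
  {j | 0 ≤ f j x}

section

variable {α : Type*} [Ring α] [LinearOrder α] [IsStrictOrderedRing α]

lemma mul_nonneg_of_pos_iff_nonneg {l a : α} (h : 0 < l ↔ 0 ≤ a) : 0 ≤ l * a := by
  rcases lt_trichotomy l 0 with hl | rfl | hl
  · exact mul_nonneg_of_nonpos_of_nonpos hl.le (not_le.1 (mt h.2 hl.not_gt)).le
  · simp
  · exact mul_nonneg hl.le (h.1 hl)

lemma mul_pos_of_pos_iff_nonneg_of_neg {l a : α} (h : 0 < l ↔ 0 ≤ a) (hl : l < 0) :
    0 < l * a :=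
  mul_pos_of_neg_of_neg hl (not_le.1 (mt h.2 hl.not_gt))

end

namespace Finset

variable {X ι : Type*} [Fintype ι] [DecidableEq ι]

theorem not_shatters_of_sum_mul_eq_const {f : ι → X → ℝ} {𝒜 : Finset (Finset ι)}
    (h𝒜 : ↑𝒜 ⊆ Set.range (signPattern f)) {T : Finset ι} {l : ι → ℝ} {c : ℝ}
    (hl : ∃ j ∈ T, l j ≠ 0) (hsum : ∀ x, ∑ j ∈ T, l j * f j x = c) : ¬ 𝒜.Shatters T := by
  intro hT
  have realize (m : ι → ℝ) : ∃ x, ∀ j ∈ T, (0 < m j ↔ 0 ≤ f j x) := by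
    obtain ⟨u, hu, hTu⟩ := hT (filter_subset (fun j => 0 < m j) T)
    obtain ⟨x, rfl⟩ := h𝒜 hu
    refine ⟨x, fun j hj => ?_⟩
    simpa [signPattern, hj] using (Finset.ext_iff.1 hTu j).symm
  obtain ⟨x₁, hx₁⟩ := realize l
  obtain ⟨x₂, hx₂⟩ := realize (-l)
  have hsum₂ : ∑ j ∈ T, (-l) j * f j x₂ = -c := by
    simp only [Pi.neg_apply, neg_mul, sum_neg_distrib, hsum]
  have hc₁ : 0 ≤ c := hsum x₁ ▸ sum_nonneg fun j hj => mul_nonneg_of_pos_iff_nonneg (hx₁ j hj)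
  have hc₂ : 0 ≤ -c := hsum₂ ▸ sum_nonneg fun j hj => mul_nonneg_of_pos_iff_nonneg (hx₂ j hj)
  obtain ⟨j₀, hj₀, hlj₀⟩ := hl
  rcases hlj₀.lt_or_gt with hneg | hpos
  · have : 0 < c := hsum x₁ ▸ sum_pos' (fun j hj => mul_nonneg_of_pos_iff_nonneg (hx₁ j hj))
      ⟨j₀, hj₀, mul_pos_of_pos_iff_nonneg_of_neg (hx₁ j₀ hj₀) hneg⟩
    linarith
  · have : 0 < -c := hsum₂ ▸ sum_pos' (fun j hj => mul_nonneg_of_pos_iff_nonneg (hx₂ j hj))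
      ⟨j₀, hj₀, mul_pos_of_pos_iff_nonneg_of_neg (hx₂ j₀ hj₀) (neg_neg_of_pos hpos)⟩
    linarith

variable {V : Type*} [AddCommGroup V] [Module ℝ V] [FiniteDimensional ℝ V]

theorem vcDim_le_finrank (φ : ι → Dual ℝ V) (c : ι → ℝ) {𝒜 : Finset (Finset ι)}
    (h𝒜 : ↑𝒜 ⊆ Set.range (signPattern fun j x => φ j x + c j)) :
    𝒜.vcDim ≤ finrank ℝ V := by
  refine Finset.sup_le fun T hT => ?_
  by_contra! hcard
  have hdep : ¬ LinearIndepOn ℝ φ (T : Set ι) := fun h =>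
    hcard.not_ge (by simpa [Subspace.dual_finrank_eq] using h.fintype_card_le_finrank)
  obtain ⟨l, hl, j, hj, hlj⟩ := not_linearIndepOn_finset_iff.1 hdep
  refine not_shatters_of_sum_mul_eq_const h𝒜 ⟨j, hj, hlj⟩ (c := ∑ j ∈ T, l j * c j)
    (fun x => ?_) (mem_shatterer.1 hT)
  have := congrArg (fun ψ : Dual ℝ V => ψ x) hl
  simp only [LinearMap.sum_apply, LinearMap.smul_apply, smul_eq_mul, LinearMap.zero_apply] at this
  simp [mul_add, sum_add_distrib, this]

theorem ncard_range_signPattern_le (φ : ι → Dual ℝ V) (c : ι → ℝ) :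
    (Set.range (signPattern fun j x => φ j x + c j)).ncard ≤
      ∑ i ∈ Iic (finrank ℝ V), (Fintype.card ι).choose i := by
  set 𝒜 := (Set.toFinite (Set.range (signPattern fun j x => φ j x + c j))).toFinset
  calc _ = #𝒜 := Set.ncard_eq_toFinset_card _ _
    _ ≤ #𝒜.shatterer := card_le_card_shatterer 𝒜
    _ ≤ ∑ i ∈ Iic 𝒜.vcDim, (Fintype.card ι).choose i := card_shatterer_le_sum_vcDim
    _ ≤ _ := sum_le_sum_of_subset (Iic_subset_Iic.2 (vcDim_le_finrank φ c (by simp [𝒜])))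

end Finset

lemma binomLe_eq_sum_Iic (k r : ℕ) : binomLe k r = ∑ i ∈ Iic r, k.choose i := by
  rw [binomLe, ← Nat.range_succ_eq_Iic]
  split_ifs with hkr
  · rw [← Nat.sum_range_choose, ← sum_subset (range_subset_range.2 (by omega : k + 1 ≤ r + 1))]
    intro i _ hi
    exact Nat.choose_eq_zero_of_lt (by simpa using hi)
  · rfl

lemma signVec_eq_comp_signPattern {d k : ℕ} (W : Matrix (Fin d) (Fin k) ℝ) (b : Fin k → ℝ) :
    signVec W b = (fun P j => if j ∈ P then 1 else -1) ∘
      signPattern fun j x => W.transpose.mulVecLin x j + b j := by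
  ext x j
  simp only [signVec, sgn, Function.comp_apply, signPattern, mem_filter, mem_univ, true_and]
  rfl

theorem number_of_sign_vectors_le_general (d k : ℕ)
    (W : Matrix (Fin d) (Fin k) ℝ) (b : Fin k → ℝ) :
    Set.ncard {s : Fin k → ℝ | ∃ x : Fin d → ℝ, s = signVec W b x} ≤ binomLe k d := by
  have hS : {s : Fin k → ℝ | ∃ x : Fin d → ℝ, s = signVec W b x} = Set.range (signVec W b) := by
    simp only [Set.range, eq_comm]
  rw [hS, signVec_eq_comp_signPattern, Set.range_comp, binomLe_eq_sum_Iic]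
  calc _ ≤ _ := Set.ncard_image_le (Set.toFinite _)
    _ ≤ _ := ncard_range_signPattern_le (fun j => LinearMap.proj j ∘ₗ W.transpose.mulVecLin) b
    _ = _ := by rw [Module.finrank_fin_fun, Fintype.card_fin]

/-- The number of distinct sign vectors of a `k`-hyperplane arrangement in `ℝ^d`
is at most `binom(k, ≤ d)`. -/
theorem number_of_sign_vectors_le (d k : ℕ) (hd : 1 ≤ d) (hk : 1 ≤ k)
    (W : Matrix (Fin d) (Fin k) ℝ) (b : Fin k → ℝ) :
    Set.ncard {s : Fin k → ℝ | ∃ x : Fin d → ℝ, s = signVec W b x} ≤ binomLe k d :=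
  number_of_sign_vectors_le_general d k W b
end

section
/- For every integer k ≥ 1, every dimension d ≥ 1, and every integer r with 1 ≤ r ≤ min(d,k): if W ∈ ℝ^{d×k} has rank(W) ≤ r and b ∈ ℝ^k, then the number of distinct sign vectors |{sgn(Wᵀx + b) : x ∈ ℝ^d}| is at most binom(k, ≤ r). -/
/-!
Encode a sign vector by the set of coordinates `j` with `(Wᵀx + b)_j ≥ 0`. If the family of these
sets shatters `B`, the columns of `W` indexed by `B` are linearly independent: a dependence
`∑_{j ∈ B} a_j W_j = 0` makes `∑_{j ∈ B} a_j (Wᵀx + b)_j` constant in `x`, yet realizing the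
pattern "nonnegative exactly where `a_j > 0`" forces this constant to be `≥ 0`, and the opposite
pattern forces it to be `≤ 0`, with one inequality strict. Hence the VC dimension of the family is
at most `rank W ≤ r`, and the Sauer–Shelah lemma bounds its size by `binom(k, ≤ r)`.
-/

open Finset Matrix

section Patterns

variable {ι X : Type*} [Fintype ι]

noncomputable def nonnegPattern (f : ι → X → ℝ) (x : X) : Finset ι := {j | 0 ≤ f j x}

open scoped Classical in
noncomputable def nonnegPatterns (f : ι → X → ℝ) : Finset (Finset ι) :=
  {A | ∃ x, nonnegPattern f x = A}

variable {f : ι → X → ℝ}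

@[simp]
theorem mem_nonnegPattern {x : X} {j : ι} : j ∈ nonnegPattern f x ↔ 0 ≤ f j x := by
  simp [nonnegPattern]

theorem mem_nonnegPatterns {A : Finset ι} : A ∈ nonnegPatterns f ↔ ∃ x, nonnegPattern f x = A := by
  simp [nonnegPatterns]

variable [DecidableEq ι] {B : Finset ι}

theorem Finset.Shatters.exists_forall_nonneg_iff (h : (nonnegPatterns f).Shatters B)
    (p : ι → Prop) : ∃ x, ∀ j ∈ B, (0 ≤ f j x ↔ p j) := by
  classical
  obtain ⟨_, hA, hBA⟩ := h (filter_subset p B)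
  obtain ⟨x, rfl⟩ := mem_nonnegPatterns.1 hA
  refine ⟨x, fun j hj => ?_⟩
  simpa [hj] using congrArg (j ∈ ·) hBA

theorem Finset.Shatters.exists_forall_mul_nonneg (h : (nonnegPatterns f).Shatters B)
    (a : ι → ℝ) : ∃ x, ∀ j ∈ B, 0 ≤ a j * f j x ∧ (a j < 0 → 0 < a j * f j x) := by
  obtain ⟨x, hx⟩ := h.exists_forall_nonneg_iff (0 < a ·)
  refine ⟨x, fun j hj => ?_⟩
  rcases lt_or_ge 0 (a j) with hpos | hnonpos
  · exact ⟨mul_nonneg hpos.le ((hx j hj).2 hpos), fun hneg => absurd hneg hpos.not_gt⟩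
  · have hf : f j x < 0 := not_le.1 ((hx j hj).not.2 (not_lt.2 hnonpos))
    exact ⟨mul_nonneg_of_nonpos_of_nonpos hnonpos hf.le, fun hneg => mul_pos_of_neg_of_neg hneg hf⟩

theorem not_shatters_of_sum_mul_eq_const (a : ι → ℝ) (ha : ∃ j ∈ B, a j ≠ 0) (C : ℝ)
    (hC : ∀ x, ∑ j ∈ B, a j * f j x = C) : ¬ (nonnegPatterns f).Shatters B := by
  intro h
  obtain ⟨x₁, hx₁⟩ := h.exists_forall_mul_nonneg a
  obtain ⟨x₂, hx₂⟩ := h.exists_forall_mul_nonneg (-a)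
  have hC₂ : ∑ j ∈ B, (-a) j * f j x₂ = -C := by simp [neg_mul, sum_neg_distrib, hC]
  have hC_nonneg : 0 ≤ C := hC x₁ ▸ sum_nonneg fun j hj => (hx₁ j hj).1
  have hC_nonpos : 0 ≤ -C := hC₂ ▸ sum_nonneg fun j hj => (hx₂ j hj).1
  obtain ⟨j, hj, haj⟩ := ha
  rcases haj.lt_or_gt with hneg | hpos
  · have : 0 < C := hC x₁ ▸ sum_pos' (fun j hj => (hx₁ j hj).1) ⟨j, hj, (hx₁ j hj).2 hneg⟩
    linarith
  · have : 0 < -C :=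
      hC₂ ▸ sum_pos' (fun j hj => (hx₂ j hj).1) ⟨j, hj, (hx₂ j hj).2 (neg_lt_zero.2 hpos)⟩
    linarith

end Patterns

theorem Matrix.card_le_rank_of_linearIndepOn_transpose {m n K : Type*} [Fintype m] [Fintype n]
    [Field K] (A : Matrix m n K) {s : Finset n} (h : LinearIndepOn K Aᵀ s) : #s ≤ A.rank := by
  have hspan : Submodule.span K (Set.range fun j : (s : Set n) => Aᵀ j) ≤
      Submodule.span K (Set.range Aᵀ) :=
    Submodule.span_mono (Set.range_comp_subset_range _ _)
  calc #s = Module.finrank K (Submodule.span K (Set.range fun j : (s : Set n) => Aᵀ j)) := by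
        rw [finrank_span_eq_card h]; simp
    _ ≤ A.rank := A.rank_eq_finrank_span_cols ▸ Submodule.finrank_mono hspan

section Affine

variable {ι n : Type*} [Fintype ι] [DecidableEq ι] [Fintype n]

theorem linearIndepOn_of_shatters_nonnegPatterns (w : ι → n → ℝ) (b : ι → ℝ) {B : Finset ι}
    (h : (nonnegPatterns fun j x => w j ⬝ᵥ x + b j).Shatters B) : LinearIndepOn ℝ w B := by
  by_contra hdep
  obtain ⟨a, hsum, j, hj, haj⟩ := not_linearIndepOn_finset_iff.1 hdep
  refine not_shatters_of_sum_mul_eq_const a ⟨j, hj, haj⟩ (∑ j ∈ B, a j * b j) (fun x => ?_) h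
  calc ∑ j ∈ B, a j * (w j ⬝ᵥ x + b j)
      = (∑ j ∈ B, a j • w j) ⬝ᵥ x + ∑ j ∈ B, a j * b j := by
        simp only [mul_add, sum_add_distrib, sum_dotProduct, smul_dotProduct, smul_eq_mul]
    _ = ∑ j ∈ B, a j * b j := by rw [hsum, zero_dotProduct, zero_add]

theorem vcDim_nonnegPatterns_le_rank (W : Matrix n ι ℝ) (b : ι → ℝ) :
    (nonnegPatterns fun j x => Wᵀ j ⬝ᵥ x + b j).vcDim ≤ W.rank :=
  Finset.sup_le fun _ hs =>
    W.card_le_rank_of_linearIndepOn_transpose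
      (linearIndepOn_of_shatters_nonnegPatterns _ b (mem_shatterer.1 hs))

end Affine

theorem binomLe_eq_sum_range (k r : ℕ) : binomLe k r = ∑ i ∈ range (r + 1), k.choose i := by
  unfold binomLe
  split_ifs with hkr
  · rw [← Nat.sum_range_choose]
    refine sum_subset (range_subset_range.2 (by omega)) fun i _ hi => ?_
    exact Nat.choose_eq_zero_of_lt (by simpa using hi)
  · rfl

theorem ncard_setOf_signVec {d k : ℕ} (W : Matrix (Fin d) (Fin k) ℝ) (b : Fin k → ℝ) :
    {s | ∃ x, s = signVec W b x}.ncard = #(nonnegPatterns fun j x => Wᵀ j ⬝ᵥ x + b j) := by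
  set signs : Finset (Fin k) → Fin k → ℝ := fun A j => if j ∈ A then 1 else -1
  have hsigns : signs.Injective := by
    intro A A' h
    ext j
    have := congrFun h j
    constructor <;> intro hj <;> by_contra hj' <;> norm_num [signs, hj, hj'] at this
  have himage : {s | ∃ x, s = signVec W b x} =
      signs '' (nonnegPatterns fun j x => Wᵀ j ⬝ᵥ x + b j) := by
    ext s
    simp only [Set.mem_ofPred_eq, Set.mem_image, mem_coe, mem_nonnegPatterns]
    constructor
    · rintro ⟨x, rfl⟩
      exact ⟨_, ⟨x, rfl⟩, funext fun j => by simp [signs, signVec, sgn, dotProduct]⟩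
    · rintro ⟨_, ⟨x, rfl⟩, rfl⟩
      exact ⟨x, funext fun j => by simp [signs, signVec, sgn, dotProduct]⟩
  rw [himage, Set.ncard_image_of_injective _ hsigns, Set.ncard_coe_finset]

theorem number_of_sign_vectors_le_of_rank_le_general (d k r : ℕ)
    (W : Matrix (Fin d) (Fin k) ℝ) (hW : W.rank ≤ r) (b : Fin k → ℝ) :
    Set.ncard {s : Fin k → ℝ | ∃ x : Fin d → ℝ, s = signVec W b x} ≤ binomLe k r := by
  set 𝒜 := nonnegPatterns fun j x => Wᵀ j ⬝ᵥ x + b j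
  rw [ncard_setOf_signVec, binomLe_eq_sum_range, Nat.range_succ_eq_Iic]
  calc #𝒜 ≤ #𝒜.shatterer := card_le_card_shatterer 𝒜
    _ ≤ ∑ i ∈ Iic 𝒜.vcDim, (Fintype.card (Fin k)).choose i := card_shatterer_le_sum_vcDim
    _ ≤ ∑ i ∈ Iic r, k.choose i := by
      rw [Fintype.card_fin]
      exact sum_le_sum_of_subset (Iic_subset_Iic.2 ((vcDim_nonnegPatterns_le_rank W b).trans hW))

/-- If `W ∈ ℝ^{d×k}` has rank at most `r` (with `1 ≤ r ≤ min(d,k)`), then the number of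
distinct sign vectors `sgn(Wᵀx + b)`, `x ∈ ℝ^d`, is at most `binom(k, ≤ r)`. -/
theorem number_of_sign_vectors_le_of_rank_le (d k r : ℕ) (hd : 1 ≤ d) (hk : 1 ≤ k)
    (hr : 1 ≤ r) (hrd : r ≤ d) (hrk : r ≤ k)
    (W : Matrix (Fin d) (Fin k) ℝ) (hW : W.rank ≤ r) (b : Fin k → ℝ) :
    Set.ncard {s : Fin k → ℝ | ∃ x : Fin d → ℝ, s = signVec W b x} ≤ binomLe k r :=
  number_of_sign_vectors_le_of_rank_le_general d k r W hW b
end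

section
/- Let d, k ≥ 1 and 1 ≤ r ≤ min(d,k) be integers, and let {(x_i, y_i)}_{i∈[n]} ⊆ ℝ^d × {±1} be a finite sequence labelled consistently by some element of HAC(d,r,k), i.e., there exists f ∈ HAC(d,r,k) with f(x_i) = y_i for all i ∈ [n]. Then there exist a matrix V = [v₁ ⋯ v_k] ∈ ℝ^{d×k}, a vector c = (c₁,…,c_k) ∈ ℝ^k, and a Boolean function h: {±1}^k → {±1} such that: (1) y_i = h(sgn(Vᵀx_i + c)) for all i ∈ [n]; (2) rank(V) ≤ r; and (3) |v_jᵀx_i + c_j| ≥ 1 for all i ∈ [n] and j ∈ [k]. -/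
/-- The hyperplane arrangement classifier class `HAC(d,r,k)`: all classifiers
`x ↦ h(sgn(Wᵀx + b))` where `W ∈ ℝ^{d×k}` has rank at most `r`, `b ∈ ℝ^k`, and
`h : {±1}^k → {±1}` is a Boolean function. -/
noncomputable def HAC (d r k : ℕ) : Set ((Fin d → ℝ) → ℝ) :=
  {f | ∃ (W : Matrix (Fin d) (Fin k) ℝ) (b : Fin k → ℝ) (h : (Fin k → ℝ) → ℝ),
    W.rank ≤ r ∧ (∀ s, h s = 1 ∨ h s = -1) ∧
    ∀ x, f x = h fun j => sgn ((∑ i, W i j * x i) + b j)}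


/-!
Each hyperplane can be moved without changing any label: for the `j`-th unit, the finitely
many sample values `tᵢ = wⱼᵀxᵢ + bⱼ` that are negative stay below some `-δ < 0`, so the
affine change `t ↦ (2/δ) t + 1` keeps the sign of every `tᵢ` and pushes it to distance at least
`1` from `0`. Scaling the columns of `W` by positive numbers does not increase its rank.
-/

open Filter Topology

theorem sgn_of_nonneg {t : ℝ} (ht : 0 ≤ t) : sgn t = 1 := if_pos ht

theorem sgn_of_neg {t : ℝ} (ht : t < 0) : sgn t = -1 := if_neg (not_le.mpr ht)

theorem exists_pos_forall_le_neg_of_neg {ι : Type*} [Finite ι] (t : ι → ℝ) :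
    ∃ δ > 0, ∀ i, t i < 0 → t i ≤ -δ := by
  have hsmall : ∀ᶠ δ in 𝓝[>] (0 : ℝ), ∀ i, t i < 0 → t i ≤ -δ := by
    refine eventually_all.2 fun i => ?_
    by_cases hi : t i < 0
    · filter_upwards [eventually_nhdsWithin_of_eventually_nhds
        (eventually_le_nhds (neg_pos.2 hi))] with δ hδ _
      linarith
    · exact .of_forall fun _ hi' => absurd hi' hi
  exact (hsmall.and self_mem_nhdsWithin).exists.imp fun δ h => ⟨h.2, h.1⟩

theorem exists_pos_sgn_mul_add_one_eq_and_one_le_abs {ι : Type*} [Finite ι] (t : ι → ℝ) :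
    ∃ a > 0, ∀ i, sgn (a * t i + 1) = sgn (t i) ∧ 1 ≤ |a * t i + 1| := by
  obtain ⟨δ, hδ, hneg⟩ := exists_pos_forall_le_neg_of_neg t
  refine ⟨2 / δ, by positivity, fun i => ?_⟩
  rcases le_or_gt 0 (t i) with hti | hti
  · have hone : 1 ≤ 2 / δ * t i + 1 := le_add_of_nonneg_left (by positivity)
    rw [sgn_of_nonneg hti, sgn_of_nonneg (by linarith), abs_of_nonneg (by linarith)]
    exact ⟨rfl, hone⟩
  · have hle : 2 / δ * t i + 1 ≤ -1 := by
      have : 2 / δ * t i ≤ 2 / δ * -δ := by gcongr; exact hneg i hti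
      rw [mul_neg, div_mul_cancel₀ _ hδ.ne'] at this
      linarith
    rw [sgn_of_neg hti, sgn_of_neg (by linarith), abs_of_neg (by linarith)]
    exact ⟨rfl, by linarith⟩

theorem HAC_canonical_form_general (d r k n : ℕ)
    (x : Fin n → Fin d → ℝ) (y : Fin n → ℝ)
    (hlab : ∃ f ∈ HAC d r k, ∀ i, f (x i) = y i) :
    ∃ (V : Matrix (Fin d) (Fin k) ℝ) (c : Fin k → ℝ) (h : (Fin k → ℝ) → ℝ),
      (∀ s, h s = 1 ∨ h s = -1) ∧
      (∀ i, y i = h fun j => sgn ((∑ l, V l j * x i l) + c j)) ∧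
      V.rank ≤ r ∧
      (∀ i j, 1 ≤ |(∑ l, V l j * x i l) + c j|) := by
  obtain ⟨f, ⟨W, b, h, hWr, hh, hf⟩, hfy⟩ := hlab
  choose a _ hsgn using fun j =>
    exists_pos_sgn_mul_add_one_eq_and_one_le_abs fun i => (∑ l, W l j * x i l) + b j
  have hV : ∀ i j, (∑ l, (W * Matrix.diagonal a) l j * x i l) + (a j * b j + 1)
      = a j * ((∑ l, W l j * x i l) + b j) + 1 := by
    intro i j
    simp only [Matrix.mul_diagonal, mul_add, Finset.mul_sum, ← add_assoc]
    congr 2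
    exact Finset.sum_congr rfl fun l _ => by ring
  refine ⟨W * Matrix.diagonal a, fun j => a j * b j + 1, h, hh, fun i => ?_,
    (Matrix.rank_mul_le_left _ _).trans hWr, fun i j => hV i j ▸ (hsgn j i).2⟩
  rw [← hfy i, hf]
  congr 1
  funext j
  rw [hV, (hsgn j i).1]

/-- Canonical form: any `HAC(d,r,k)`-labelled sequence `{(xᵢ,yᵢ)}` can be labelled by a
hyperplane arrangement classifier `h ∘ sgn(Vᵀ· + c)` with `rank(V) ≤ r` such that every
sample point has margin `|vⱼᵀxᵢ + cⱼ| ≥ 1` from every hyperplane. -/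
theorem HAC_canonical_form (d r k n : ℕ) (hd : 1 ≤ d) (hk : 1 ≤ k)
    (hr : 1 ≤ r) (hrd : r ≤ d) (hrk : r ≤ k)
    (x : Fin n → Fin d → ℝ) (y : Fin n → ℝ)
    (hlab : ∃ f ∈ HAC d r k, ∀ i, f (x i) = y i) :
    ∃ (V : Matrix (Fin d) (Fin k) ℝ) (c : Fin k → ℝ) (h : (Fin k → ℝ) → ℝ),
      (∀ s, h s = 1 ∨ h s = -1) ∧
      (∀ i, y i = h fun j => sgn ((∑ l, V l j * x i l) + c j)) ∧
      V.rank ≤ r ∧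
      (∀ i j, 1 ≤ |(∑ l, V l j * x i l) + c j|) :=
  HAC_canonical_form_general d r k n x y hlab
end

section
/- Let n, m ≥ 1 be integers, a₁,…,a_m ∈ ℝ^n and b₁,…,b_m ∈ ℝ, and for each subset I ⊆ [m] define the polyhedron P_I = {x ∈ ℝ^n : a_iᵀx ≤ b_i for all i ∈ I}. Assume P_{[m]} is nonempty. Then: (1) for every I ⊆ [m], the minimization of ½‖x‖₂² over x ∈ P_I has a unique minimizer, denoted x*_I; and (2) there exists a subset J ⊆ [m] with |J| ≤ n such that for every I ⊆ [m] with J ⊆ I, one has x*_I = x*_{[m]}. -/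
/-- The polyhedron `P_I = {x ∈ ℝ^n : aᵢᵀx ≤ bᵢ for all i ∈ I}`. -/
def polyhedron {n m : ℕ} (a : Fin m → EuclideanSpace ℝ (Fin n)) (b : Fin m → ℝ)
    (I : Finset (Fin m)) : Set (EuclideanSpace ℝ (Fin n)) :=
  {x | ∀ i ∈ I, (∑ l, a i l * x l) ≤ b i}

/-- `x` minimizes `½‖·‖₂²` over the set `P`. -/
noncomputable def IsMinNormPoint {n : ℕ} (P : Set (EuclideanSpace ℝ (Fin n)))
    (x : EuclideanSpace ℝ (Fin n)) : Prop :=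
  x ∈ P ∧ ∀ y ∈ P, (1 / 2 : ℝ) * ‖x‖ ^ 2 ≤ (1 / 2 : ℝ) * ‖y‖ ^ 2

/-!
The minimum-norm point `x*` of `P_[m]` satisfies the variational inequality `⟪x*, y - x*⟫ ≥ 0`
on `P_[m]`. Moving from `x*` in a direction `d` with `⟪aᵢ, d⟫ ≤ 0` for the tight constraints stays
feasible for a short time, so `⟪x*, d⟫ ≥ 0` for all such `d`. By Farkas' lemma `-x*` is then a
nonnegative combination of the tight normals `aᵢ`, and by the conic Carathéodory theorem (which
also makes finitely generated cones closed, as Farkas' lemma needs) of linearly independent ones,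
so of at most `n` of them. This certificate on `J` shows that `x*` minimizes the norm over `P_J`,
hence over every `P_I` with `J ⊆ I`, since `x* ∈ P_[m] ⊆ P_I ⊆ P_J`.
-/

open Finset
open scoped RealInnerProductSpace

namespace PointedCone

variable {E ι : Type*} [AddCommGroup E] [Module ℝ E]

theorem mem_hull_image_finset_iff {v : ι → E} {s : Finset ι} {x : E} :
    x ∈ hull ℝ (v '' s) ↔ ∃ c : ι → ℝ, (∀ i ∈ s, 0 ≤ c i) ∧ ∑ i ∈ s, c i • v i = x := by
  classical
  constructor
  · intro hx
    induction hx using Submodule.span_induction with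
    | mem _ hx =>
      obtain ⟨j, hj, rfl⟩ := hx
      have hsingle : (0 : ι → ℝ) ≤ Pi.single j 1 := Pi.single_nonneg.2 zero_le_one
      exact ⟨Pi.single j 1, fun i _ => hsingle i, by simp [Pi.single_apply, mem_coe.1 hj]⟩
    | zero => exact ⟨0, fun _ _ => le_rfl, by simp⟩
    | add _ _ _ _ hx hy =>
      obtain ⟨c, hc, rfl⟩ := hx
      obtain ⟨d, hd, rfl⟩ := hy
      exact ⟨c + d, fun i hi => add_nonneg (hc i hi) (hd i hi), by
        simp only [Pi.add_apply, add_smul, sum_add_distrib]⟩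
    | smul r _ _ hx =>
      obtain ⟨c, hc, rfl⟩ := hx
      exact ⟨(r : ℝ) • c, fun i hi => mul_nonneg r.2 (hc i hi), by
        simp only [← Nonneg.coe_smul, smul_sum, Pi.smul_apply, smul_smul, smul_eq_mul]⟩
  · rintro ⟨c, hc, rfl⟩
    exact sum_mem fun i hi => smul_mem _ (hc i hi) (subset_hull (Set.mem_image_of_mem v hi))

theorem exists_mem_hull_image_erase {v : ι → E} {s : Finset ι} {c g : ι → ℝ} [DecidableEq ι]
    (hc : ∀ i ∈ s, 0 ≤ c i) (hg : ∑ i ∈ s, g i • v i = 0) (hpos : ∃ j ∈ s, 0 < g j) :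
    ∃ i ∈ s, ∑ j ∈ s, c j • v j ∈ hull ℝ (v '' (s.erase i)) := by
  -- move along `-g` until the first coefficient hits zero
  obtain ⟨i, hi, hmin⟩ := exists_min_image (s.filter (0 < g ·)) (fun j => c j / g j)
    (by simpa [Finset.Nonempty] using hpos)
  rw [mem_filter] at hi
  set r := c i / g i
  have hr : 0 ≤ r := div_nonneg (hc i hi.1) hi.2.le
  have hc' : ∀ j ∈ s, 0 ≤ c j - r * g j := fun j hj => by
    rcases le_or_gt (g j) 0 with hgj | hgj
    · linarith [hc j hj, mul_nonpos_of_nonneg_of_nonpos hr hgj]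
    · exact sub_nonneg.2 ((le_div_iff₀ hgj).1 (hmin j (mem_filter.2 ⟨hj, hgj⟩)))
  have hci : c i - r * g i = 0 := by simp [r, div_mul_cancel₀ _ hi.2.ne']
  refine ⟨i, hi.1, mem_hull_image_finset_iff.2 ⟨fun j => c j - r * g j,
    fun j hj => hc' j (mem_of_mem_erase hj), ?_⟩⟩
  rw [sum_erase _ (by simp only [hci, zero_smul])]
  simp only [sub_smul, mul_smul, sum_sub_distrib, ← smul_sum, hg, smul_zero, sub_zero]

theorem exists_linearIndepOn_mem_hull_image {v : ι → E} {s : Finset ι} {x : E}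
    (hx : x ∈ hull ℝ (v '' s)) :
    ∃ t ⊆ s, LinearIndepOn ℝ v (t : Set ι) ∧ x ∈ hull ℝ (v '' t) := by
  classical
  induction s using Finset.strongInduction with
  | H s ih =>
  by_cases hind : LinearIndepOn ℝ v (s : Set ι)
  · exact ⟨s, subset_rfl, hind, hx⟩
  obtain ⟨g, hg, j, hj, hgj⟩ := not_linearIndepOn_finset_iff.1 hind
  obtain ⟨c, hc, rfl⟩ := mem_hull_image_finset_iff.1 hx
  have hdep : ∃ g : ι → ℝ, ∑ i ∈ s, g i • v i = 0 ∧ ∃ j ∈ s, 0 < g j := by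
    rcases hgj.lt_or_gt with hneg | hpos
    · exact ⟨-g, by simp [neg_smul, hg], j, hj, neg_pos.2 hneg⟩
    · exact ⟨g, hg, j, hj, hpos⟩
  obtain ⟨g, hg, hpos⟩ := hdep
  obtain ⟨i, hi, hx'⟩ := exists_mem_hull_image_erase hc hg hpos
  obtain ⟨t, hts, ht, hxt⟩ := ih _ (erase_ssubset hi) hx'
  exact ⟨t, hts.trans (erase_subset _ _), ht, hxt⟩

section Topology

variable [TopologicalSpace E] [IsTopologicalAddGroup E] [ContinuousSMul ℝ E] [T2Space E]

theorem isClosed_hull_image_of_linearIndepOn {v : ι → E} {t : Finset ι}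
    (ht : LinearIndepOn ℝ v (t : Set ι)) : IsClosed (hull ℝ (v '' t) : Set E) := by
  set f := Fintype.linearCombination ℝ (fun i : t => v i)
  have hf : Topology.IsClosedEmbedding f := LinearMap.isClosedEmbedding_of_injective
    (LinearMap.ker_eq_bot.2 ht.fintypeLinearCombination_injective)
  have hcone : (hull ℝ (v '' t) : Set E) = f '' Set.Ici 0 := by
    ext x
    constructor
    · intro hx
      obtain ⟨c, hc, rfl⟩ := mem_hull_image_finset_iff.1 hx
      exact ⟨fun i => c i, fun i => hc i i.2, by
        simp only [f, Fintype.linearCombination_apply, sum_coe_sort t (fun i => c i • v i)]⟩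
    · rintro ⟨c, hc, rfl⟩
      exact sum_mem fun i _ => smul_mem _ (hc i) (subset_hull ⟨i, i.2, rfl⟩)
  rw [hcone]
  exact hf.isClosedMap _ isClosed_Ici

theorem isClosed_hull_image_finset (v : ι → E) (s : Finset ι) :
    IsClosed (hull ℝ (v '' s) : Set E) := by
  classical
  have hunion : (hull ℝ (v '' s) : Set E) =
      ⋃ (t : Finset ι)
        (_ : t ∈ s.powerset.filter fun t : Finset ι => LinearIndepOn ℝ v (t : Set ι)),
        (hull ℝ (v '' t) : Set E) := by
    ext x
    simp only [Set.mem_iUnion, mem_filter, mem_powerset, SetLike.mem_coe, exists_prop]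
    constructor
    · intro hx
      obtain ⟨t, hts, ht, hxt⟩ := exists_linearIndepOn_mem_hull_image hx
      exact ⟨t, ⟨hts, ht⟩, hxt⟩
    · rintro ⟨t, ⟨hts, -⟩, hxt⟩
      exact Submodule.span_mono (Set.image_mono (coe_subset.2 hts)) hxt
  rw [hunion]
  exact isClosed_biUnion_finset fun t ht =>
    isClosed_hull_image_of_linearIndepOn (mem_filter.1 ht).2

end Topology

theorem mem_hull_image_finset_of_forall_inner_nonneg {F : Type*} [NormedAddCommGroup F]
    [InnerProductSpace ℝ F] [FiniteDimensional ℝ F] {v : ι → F} {s : Finset ι} {z : F}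
    (h : ∀ y, (∀ i ∈ s, 0 ≤ ⟪v i, y⟫) → 0 ≤ ⟪z, y⟫) : z ∈ hull ℝ (v '' s) := by
  by_contra hz
  let C : ProperCone ℝ F := ⟨hull ℝ (v '' s), isClosed_hull_image_finset v s⟩
  obtain ⟨y, hCy, hzy⟩ := C.hyperplane_separation' (x₀ := z) hz
  exact (h y fun i hi => hCy _ (subset_hull ⟨i, hi, rfl⟩)).not_gt hzy

end PointedCone

section MinNorm

variable {F : Type*} [NormedAddCommGroup F] [InnerProductSpace ℝ F] {P : Set F} {x y : F}

theorem norm_le_norm_of_inner_sub_nonneg (h : 0 ≤ ⟪x, y - x⟫) : ‖x‖ ≤ ‖y‖ := by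
  have hexp : ‖y‖ ^ 2 = ‖x‖ ^ 2 + 2 * ⟪x, y - x⟫ + ‖y - x‖ ^ 2 := by
    simpa using norm_add_sq_real x (y - x)
  exact (sq_le_sq₀ (norm_nonneg _) (norm_nonneg _)).1 (by nlinarith [sq_nonneg ‖y - x‖])

theorem isMinOn_norm_iff_inner_sub_nonneg (hP : Convex ℝ P) (hx : x ∈ P) :
    IsMinOn (‖·‖) P x ↔ ∀ y ∈ P, 0 ≤ ⟪x, y - x⟫ := by
  refine ⟨fun hmin y hy => ?_, fun h => isMinOn_iff.2 fun y hy =>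
    norm_le_norm_of_inner_sub_nonneg (h y hy)⟩
  have : Nonempty P := ⟨⟨x, hx⟩⟩
  have hinf : ‖0 - x‖ = ⨅ w : P, ‖0 - (w : F)‖ := by
    simp only [zero_sub, norm_neg]
    exact le_antisymm (le_ciInf fun w => isMinOn_iff.1 hmin w w.2)
      (ciInf_le (⟨0, Set.forall_mem_range.2 fun _ => norm_nonneg _⟩ :
        BddBelow (Set.range fun w : P => ‖(w : F)‖)) ⟨x, hx⟩)
  simpa [inner_neg_left] using (norm_eq_iInf_iff_real_inner_le_zero hP hx).1 hinf y hy

theorem existsUnique_isMinOn_norm (hne : P.Nonempty) (hcl : IsComplete P) (hP : Convex ℝ P) :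
    ∃! x, x ∈ P ∧ IsMinOn (‖·‖) P x := by
  obtain ⟨x, hx, hinf⟩ := exists_norm_eq_iInf_of_complete_convex hne hcl hP 0
  have hx_var : ∀ y ∈ P, 0 ≤ ⟪x, y - x⟫ := fun y hy => by
    simpa [inner_neg_left] using (norm_eq_iInf_iff_real_inner_le_zero hP hx).1 hinf y hy
  refine ⟨x, ⟨hx, (isMinOn_norm_iff_inner_sub_nonneg hP hx).2 hx_var⟩, ?_⟩
  rintro y ⟨hy, hymin⟩
  have h₁ := hx_var y hy
  have h₂ := (isMinOn_norm_iff_inner_sub_nonneg hP hy).1 hymin x hx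
  have hsq : ‖y - x‖ ^ 2 = -(⟪x, y - x⟫ + ⟪y, x - y⟫) := by
    rw [norm_sub_sq_real, inner_sub_right, inner_sub_right, real_inner_self_eq_norm_sq,
      real_inner_self_eq_norm_sq, real_inner_comm x y]
    ring
  exact sub_eq_zero.1 (norm_eq_zero.1 (pow_eq_zero_iff two_ne_zero |>.1
    (le_antisymm (by linarith) (sq_nonneg _))))

end MinNorm

section InnerPolyhedron

open Filter Topology

variable {F ι : Type*} [NormedAddCommGroup F] [InnerProductSpace ℝ F]
  {a : ι → F} {b : ι → ℝ} {I J : Finset ι} {x d : F}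

def innerPolyhedron (a : ι → F) (b : ι → ℝ) (I : Finset ι) : Set F :=
  {x | ∀ i ∈ I, ⟪a i, x⟫ ≤ b i}

theorem innerPolyhedron_anti (h : J ⊆ I) : innerPolyhedron a b I ⊆ innerPolyhedron a b J :=
  fun _ hx i hi => hx i (h hi)

theorem convex_innerPolyhedron : Convex ℝ (innerPolyhedron a b I) := by
  intro x hx y hy s t hs ht hst i hi
  rw [inner_add_right, real_inner_smul_right, real_inner_smul_right]
  calc s * ⟪a i, x⟫ + t * ⟪a i, y⟫ ≤ s * b i + t * b i := by
        gcongr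
        exacts [hx i hi, hy i hi]
    _ = b i := by rw [← add_mul, hst, one_mul]

theorem isClosed_innerPolyhedron : IsClosed (innerPolyhedron a b I) := by
  simp only [innerPolyhedron, Set.ofPred_forall]
  exact isClosed_biInter fun i _ => isClosed_le (by fun_prop) continuous_const

theorem eventually_add_smul_mem_innerPolyhedron (hx : x ∈ innerPolyhedron a b I)
    (hd : ∀ i ∈ I, ⟪a i, x⟫ = b i → ⟪a i, d⟫ ≤ 0) :
    ∀ᶠ t in 𝓝[>] (0 : ℝ), x + t • d ∈ innerPolyhedron a b I := by
  simp only [innerPolyhedron, Set.mem_ofPred_eq, eventually_all_finset]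
  intro i hi
  rcases (hx i hi).lt_or_eq with hlt | heq
  · have hcont : Continuous fun t : ℝ => ⟪a i, x + t • d⟫ := by fun_prop
    refine nhdsWithin_le_nhds ((hcont.continuousAt.eventually_lt continuousAt_const ?_).mono
      fun _ ht => ht.le)
    simpa using hlt
  · filter_upwards [self_mem_nhdsWithin] with t (ht : 0 < t)
    rw [inner_add_right, real_inner_smul_right, heq]
    linarith [mul_nonpos_of_nonneg_of_nonpos ht.le (hd i hi heq)]

theorem inner_nonneg_of_isMinOn_norm_innerPolyhedron (hx : x ∈ innerPolyhedron a b I)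
    (hmin : IsMinOn (‖·‖) (innerPolyhedron a b I) x)
    (hd : ∀ i ∈ I, ⟪a i, x⟫ = b i → ⟪a i, d⟫ ≤ 0) : 0 ≤ ⟪x, d⟫ := by
  obtain ⟨t, hmem, ht⟩ :=
    ((eventually_add_smul_mem_innerPolyhedron hx hd).and self_mem_nhdsWithin).exists
  have := (isMinOn_norm_iff_inner_sub_nonneg convex_innerPolyhedron hx).1 hmin _ hmem
  rw [add_sub_cancel_left, real_inner_smul_right] at this
  exact nonneg_of_mul_nonneg_right this ht

theorem isMinOn_norm_innerPolyhedron_of_neg_mem_hull (htight : ∀ i ∈ J, ⟪a i, x⟫ = b i)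
    (hx : -x ∈ PointedCone.hull ℝ (a '' J)) : IsMinOn (‖·‖) (innerPolyhedron a b J) x := by
  obtain ⟨μ, hμ, hsum⟩ := PointedCone.mem_hull_image_finset_iff.1 hx
  refine isMinOn_iff.2 fun y hy => norm_le_norm_of_inner_sub_nonneg ?_
  calc 0 ≤ ∑ i ∈ J, μ i * (b i - ⟪a i, y⟫) :=
        sum_nonneg fun i hi => mul_nonneg (hμ i hi) (sub_nonneg.2 (hy i hi))
    _ = ⟪-x, x - y⟫ := by
        rw [← hsum, sum_inner]
        refine sum_congr rfl fun i hi => ?_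
        rw [real_inner_smul_left, inner_sub_right, htight i hi]
    _ = ⟪x, y - x⟫ := by rw [inner_neg_left, ← inner_neg_right, neg_sub]

theorem exists_linearIndepOn_isMinOn_norm_innerPolyhedron [FiniteDimensional ℝ F]
    (hx : x ∈ innerPolyhedron a b I) (hmin : IsMinOn (‖·‖) (innerPolyhedron a b I) x) :
    ∃ J ⊆ I, LinearIndepOn ℝ a (J : Set ι) ∧ IsMinOn (‖·‖) (innerPolyhedron a b J) x := by
  classical
  set T := I.filter fun i => ⟪a i, x⟫ = b i
  have hT : -x ∈ PointedCone.hull ℝ (a '' T) :=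
    PointedCone.mem_hull_image_finset_of_forall_inner_nonneg fun y hy => by
      rw [inner_neg_left, ← inner_neg_right]
      refine inner_nonneg_of_isMinOn_norm_innerPolyhedron hx hmin fun i hi hti => ?_
      rw [inner_neg_right, neg_nonpos]
      exact hy i (mem_filter.2 ⟨hi, hti⟩)
  obtain ⟨J, hJT, hJ, hxJ⟩ := PointedCone.exists_linearIndepOn_mem_hull_image hT
  exact ⟨J, hJT.trans (filter_subset _ _), hJ,
    isMinOn_norm_innerPolyhedron_of_neg_mem_hull (fun i hi => (mem_filter.1 (hJT hi)).2) hxJ⟩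

end InnerPolyhedron

theorem polyhedron_eq_innerPolyhedron {n m : ℕ} (a : Fin m → EuclideanSpace ℝ (Fin n))
    (b : Fin m → ℝ) (I : Finset (Fin m)) : polyhedron a b I = innerPolyhedron a b I := by
  ext x
  simp [polyhedron, innerPolyhedron, PiLp.inner_apply, mul_comm]

theorem isMinNormPoint_iff_isMinOn {n : ℕ} {P : Set (EuclideanSpace ℝ (Fin n))}
    {x : EuclideanSpace ℝ (Fin n)} : IsMinNormPoint P x ↔ x ∈ P ∧ IsMinOn (‖·‖) P x := by
  simp only [IsMinNormPoint, isMinOn_iff, mul_le_mul_iff_right₀ one_half_pos,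
    sq_le_sq₀ (norm_nonneg _) (norm_nonneg _)]

theorem min_norm_point_caratheodory_general (n m : ℕ)
    (a : Fin m → EuclideanSpace ℝ (Fin n)) (b : Fin m → ℝ)
    (hne : (polyhedron a b Finset.univ).Nonempty) :
    (∀ I : Finset (Fin m), ∃! x, IsMinNormPoint (polyhedron a b I) x) ∧
    ∃ J : Finset (Fin m), J.card ≤ n ∧
      ∀ I : Finset (Fin m), J ⊆ I →
        ∀ xI xM, IsMinNormPoint (polyhedron a b I) xI →
          IsMinNormPoint (polyhedron a b Finset.univ) xM → xI = xM := by
  simp only [polyhedron_eq_innerPolyhedron, isMinNormPoint_iff_isMinOn] at hne ⊢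
  have hunique (I : Finset (Fin m)) :
      ∃! x, x ∈ innerPolyhedron a b I ∧ IsMinOn (‖·‖) (innerPolyhedron a b I) x :=
    existsUnique_isMinOn_norm (hne.mono (innerPolyhedron_anti (subset_univ I)))
      isClosed_innerPolyhedron.isComplete convex_innerPolyhedron
  obtain ⟨x, ⟨hx, hmin⟩, -⟩ := hunique univ
  obtain ⟨J, -, hJ, hminJ⟩ := exists_linearIndepOn_isMinOn_norm_innerPolyhedron hx hmin
  refine ⟨hunique, J, ?_, fun I hJI xI xM hxI hxM => ?_⟩
  · simpa using hJ.fintype_card_le_finrank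
  have hxI' : x ∈ innerPolyhedron a b I ∧ IsMinOn (‖·‖) (innerPolyhedron a b I) x :=
    ⟨innerPolyhedron_anti (subset_univ I) hx, hminJ.on_subset (innerPolyhedron_anti hJI)⟩
  rw [(hunique I).unique hxI hxI', (hunique univ).unique hxM ⟨hx, hmin⟩]

/-- Carathéodory-type theorem for projections onto polyhedra: if `P_{[m]}` is nonempty then
(1) for each `I ⊆ [m]` the minimization of `½‖x‖₂²` over `P_I` has a unique minimizer, and
(2) there is `J ⊆ [m]` with `|J| ≤ n` such that for every `I ⊇ J` the minimizer over `P_I`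
coincides with the minimizer over `P_{[m]}`. -/
theorem min_norm_point_caratheodory (n m : ℕ) (hn : 1 ≤ n) (hm : 1 ≤ m)
    (a : Fin m → EuclideanSpace ℝ (Fin n)) (b : Fin m → ℝ)
    (hne : (polyhedron a b Finset.univ).Nonempty) :
    (∀ I : Finset (Fin m), ∃! x, IsMinNormPoint (polyhedron a b I) x) ∧
    ∃ J : Finset (Fin m), J.card ≤ n ∧
      ∀ I : Finset (Fin m), J ⊆ I →
        ∀ xI xM, IsMinNormPoint (polyhedron a b I) xI →
          IsMinNormPoint (polyhedron a b Finset.univ) xM → xI = xM :=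
  min_norm_point_caratheodory_general n m a b hne
end

section
/- Let P be a joint probability distribution on [0,1]^d × {±1} with marginal P_X and posterior η(x) = P(Y = 1 | X = x), and suppose η admits a version that is L-Lipschitz with respect to the Euclidean norm on [0,1]^d. Let R ⊆ [0,1]^d be an axis-aligned cube of side length ℓ (intersected with [0,1]^d). Then min{ ∫_R η dP_X, ∫_R (1 − η) dP_X } − ∫_R min{η(x), 1 − η(x)} dP_X(x) ≤ 2 L √d · ℓ · P_X(R). -/
/-!
On the cube `R` the posterior `η` oscillates by at most `c = L√d·ℓ` around its value at any
point `x₀ ∈ R`. If `η x₀ ≤ 1/2`, then `η - min(η, 1 - η) = max(2η - 1, 0) ≤ 2c` on `R`, so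
`∫_R η` exceeds the Bayes error by at most `2c·P_X(R)`; the case `η x₀ ≥ 1/2` is symmetric.
-/

open MeasureTheory
open scoped ENNReal

theorem EuclideanSpace.dist_le_sqrt_card_mul {ι : Type*} [Fintype ι] {x y : EuclideanSpace ℝ ι}
    {ℓ : ℝ} (hℓ : 0 ≤ ℓ) (h : ∀ i, dist (x i) (y i) ≤ ℓ) :
    dist x y ≤ √(Fintype.card ι) * ℓ := by
  rw [EuclideanSpace.dist_eq]
  calc √(∑ i, dist (x i) (y i) ^ 2) ≤ √(∑ _ : ι, ℓ ^ 2) := by gcongr with i; exact h i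
    _ = √(Fintype.card ι) * ℓ := by simp [Real.sqrt_mul, Real.sqrt_sq hℓ]

theorem EuclideanSpace.dist_le_sqrt_card_mul_of_mem_Icc {ι : Type*} [Fintype ι] {a : ι → ℝ}
    {ℓ : ℝ} (hℓ : 0 ≤ ℓ) {x y : EuclideanSpace ℝ ι} (hx : ∀ i, x i ∈ Set.Icc (a i) (a i + ℓ))
    (hy : ∀ i, y i ∈ Set.Icc (a i) (a i + ℓ)) :
    dist x y ≤ √(Fintype.card ι) * ℓ :=
  dist_le_sqrt_card_mul hℓ fun i =>
    (Real.dist_le_of_mem_Icc (hx i) (hy i)).trans_eq (add_sub_cancel_left _ _)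

section SetIntegral

variable {X : Type*} [MeasurableSpace X] {μ : Measure X} {s : Set X}

theorem setIntegral_min_sub_setIntegral_min_le (hs : MeasurableSet s) (hμs : μ s ≠ ∞)
    {f g : X → ℝ} (hf : IntegrableOn f s μ) (hg : IntegrableOn g s μ) {c : ℝ} (hc : 0 ≤ c)
    (hfg : ∀ x ∈ s, f x - g x ≤ c) :
    min (∫ x in s, f x ∂μ) (∫ x in s, g x ∂μ) - ∫ x in s, min (f x) (g x) ∂μ ≤ c * μ.real s := by
  have hmin : IntegrableOn (fun x => min (f x) (g x)) s μ := hf.inf hg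
  calc min (∫ x in s, f x ∂μ) (∫ x in s, g x ∂μ) - ∫ x in s, min (f x) (g x) ∂μ
      ≤ ∫ x in s, f x ∂μ - ∫ x in s, min (f x) (g x) ∂μ := by gcongr; exact min_le_left _ _
    _ = ∫ x in s, (f x - min (f x) (g x)) ∂μ := (integral_sub hf hmin).symm
    _ ≤ ∫ _ in s, c ∂μ := by
      refine setIntegral_mono_on (hf.sub hmin) (integrableOn_const hμs) hs fun x hx => ?_
      exact sub_le_comm.1 (le_min (by linarith) (by linarith [hfg x hx]))
    _ = c * μ.real s := by rw [setIntegral_const, smul_eq_mul, mul_comm]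

theorem setIntegral_min_one_sub_sub_le (hs : MeasurableSet s) (hμs : μ s ≠ ∞) {η : X → ℝ}
    (hη : IntegrableOn η s μ) {x₀ : X} (hx₀ : x₀ ∈ s) {c : ℝ}
    (hosc : ∀ x ∈ s, |η x - η x₀| ≤ c) :
    min (∫ x in s, η x ∂μ) (∫ x in s, (1 - η x) ∂μ) - ∫ x in s, min (η x) (1 - η x) ∂μ ≤
      2 * c * μ.real s := by
  have hc : 0 ≤ c := by simpa using hosc x₀ hx₀
  have hη' : IntegrableOn (fun x => 1 - η x) s μ := (integrableOn_const hμs).sub hη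
  rcases le_total (η x₀) (1 / 2) with h | h
  · refine setIntegral_min_sub_setIntegral_min_le hs hμs hη hη' (by positivity) fun x hx => ?_
    linarith [abs_le.1 (hosc x hx)]
  · have := setIntegral_min_sub_setIntegral_min_le hs hμs hη' hη (c := 2 * c) (by positivity)
      fun x hx => by linarith [abs_le.1 (hosc x hx)]
    simpa only [min_comm] using this

end SetIntegral

theorem cube_majority_excess_error_general (d : ℕ) (hd : 1 ≤ d) (L : ℝ)
    (P : Measure (EuclideanSpace ℝ (Fin d) × ℝ)) [IsProbabilityMeasure P]
    (η : EuclideanSpace ℝ (Fin d) → ℝ) (hηmeas : Measurable η)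
    (hηbd : ∀ x, 0 ≤ η x ∧ η x ≤ 1)
    -- η is L-Lipschitz on [0,1]^d w.r.t. the Euclidean norm
    (hlip : ∀ x, (∀ i, x i ∈ Set.Icc (0 : ℝ) 1) → ∀ x', (∀ i, x' i ∈ Set.Icc (0 : ℝ) 1) →
      |η x - η x'| ≤ L * ‖x - x'‖)
    -- R is an axis-aligned cube of side length ℓ, intersected with [0,1]^d
    (a : Fin d → ℝ) (ℓ : ℝ) (R : Set (EuclideanSpace ℝ (Fin d)))
    (hRdef : R = {x : EuclideanSpace ℝ (Fin d) |
      (∀ j, x j ∈ Set.Icc (a j) (a j + ℓ)) ∧ ∀ j, x j ∈ Set.Icc (0 : ℝ) 1}) :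
    min (∫ x in R, η x ∂(P.map Prod.fst)) (∫ x in R, (1 - η x) ∂(P.map Prod.fst)) -
        (∫ x in R, min (η x) (1 - η x) ∂(P.map Prod.fst)) ≤
      2 * L * Real.sqrt d * ℓ * ((P.map Prod.fst) R).toReal := by
  set μ := P.map Prod.fst
  rcases R.eq_empty_or_nonempty with hR | ⟨x₀, hx₀⟩
  · simp [hR]
  have hRmem : ∀ x ∈ R, (∀ j, x j ∈ Set.Icc (a j) (a j + ℓ)) ∧ ∀ j, x j ∈ Set.Icc (0 : ℝ) 1 :=
    fun x hx => by rwa [hRdef] at hx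
  have hL : 0 ≤ L := by
    set e := EuclideanSpace.single (⟨0, hd⟩ : Fin d) (1 : ℝ)
    have he : ∀ i, e i ∈ Set.Icc (0 : ℝ) 1 := fun i => by
      by_cases h : i = ⟨0, hd⟩ <;> simp [e, h]
    simpa [e] using (abs_nonneg _).trans (hlip e he 0 fun _ => by simp)
  have hℓ : 0 ≤ ℓ := by linarith [((hRmem x₀ hx₀).1 ⟨0, hd⟩).1, ((hRmem x₀ hx₀).1 ⟨0, hd⟩).2]
  have hosc : ∀ x ∈ R, |η x - η x₀| ≤ L * √d * ℓ := fun x hx => calc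
    |η x - η x₀| ≤ L * dist x x₀ := by
      rw [dist_eq_norm]; exact hlip x (hRmem x hx).2 x₀ (hRmem x₀ hx₀).2
    _ ≤ L * (√d * ℓ) := by
      gcongr
      simpa using EuclideanSpace.dist_le_sqrt_card_mul_of_mem_Icc hℓ (hRmem x hx).1 (hRmem x₀ hx₀).1
    _ = L * √d * ℓ := by ring
  have hη : Integrable η μ := Integrable.of_bound hηmeas.aestronglyMeasurable 1 <|
    ae_of_all _ fun x => by rw [Real.norm_of_nonneg (hηbd x).1]; exact (hηbd x).2
  have := setIntegral_min_one_sub_sub_le (hRdef ▸ by measurability) (measure_ne_top _ _)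
    hη.integrableOn hx₀ hosc
  simpa [measureReal_def, mul_assoc] using this

/-- For an `L`-Lipschitz posterior `η` and an axis-aligned cube `R` of side `ℓ`
(intersected with `[0,1]^d`), the excess of the cell-majority error
`min{∫_R η dP_X, ∫_R (1-η) dP_X}` over the Bayes error `∫_R min{η, 1-η} dP_X`
is at most `2L√d·ℓ·P_X(R)`. -/
theorem cube_majority_excess_error (d : ℕ) (hd : 1 ≤ d) (L : ℝ)
    (P : Measure (EuclideanSpace ℝ (Fin d) × ℝ)) [IsProbabilityMeasure P]
    -- P is supported on [0,1]^d × {±1}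
    (hsupp : P {p | (∀ i, p.1 i ∈ Set.Icc (0 : ℝ) 1) ∧ (p.2 = 1 ∨ p.2 = -1)} = 1)
    -- η is a version of the posterior class probability x ↦ P(Y = 1 | X = x)
    (η : EuclideanSpace ℝ (Fin d) → ℝ) (hηmeas : Measurable η)
    (hηbd : ∀ x, 0 ≤ η x ∧ η x ≤ 1)
    (hpost : ∀ A : Set (EuclideanSpace ℝ (Fin d)), MeasurableSet A →
      (P (A ×ˢ ({1} : Set ℝ))).toReal = ∫ x in A, η x ∂(P.map Prod.fst))
    -- η is L-Lipschitz on [0,1]^d w.r.t. the Euclidean norm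
    (hlip : ∀ x, (∀ i, x i ∈ Set.Icc (0 : ℝ) 1) → ∀ x', (∀ i, x' i ∈ Set.Icc (0 : ℝ) 1) →
      |η x - η x'| ≤ L * ‖x - x'‖)
    -- R is an axis-aligned cube of side length ℓ, intersected with [0,1]^d
    (a : Fin d → ℝ) (ℓ : ℝ) (R : Set (EuclideanSpace ℝ (Fin d)))
    (hRdef : R = {x : EuclideanSpace ℝ (Fin d) |
      (∀ j, x j ∈ Set.Icc (a j) (a j + ℓ)) ∧ ∀ j, x j ∈ Set.Icc (0 : ℝ) 1}) :
    min (∫ x in R, η x ∂(P.map Prod.fst)) (∫ x in R, (1 - η x) ∂(P.map Prod.fst)) -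
        (∫ x in R, min (η x) (1 - η x) ∂(P.map Prod.fst)) ≤
      2 * L * Real.sqrt d * ℓ * ((P.map Prod.fst) R).toReal :=
  cube_majority_excess_error_general d hd L P η hηmeas hηbd hlip a ℓ R hRdef
end
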